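/- Let q and r be positive integers with d = gcd(q, r), and let d' be the largest divisor of d coprime to both q/d and r/d. Then in the group ring ℤ[ℚ/ℤ], F_q · F_r = φ(d) · ∑_{e | d'} c(d', e) · F_{qr/(d·e)}, where c(d', e) = ∏_{p | d', p ∤ e} (1 − 1/(p−1)), the product over primes p dividing d' but not e. -/

import Mathlib

/-!
Both sides factor over the primes. `F` is multiplicative on coprime indices, since an element
of order `m * n` with `gcd m n = 1` is uniquely a sum of elements of orders `m` and `n`; and the
right-hand side is multiplicative in `(q, r, d')` along coprime factorisations. This reduces the
identity to `q = p ^ α`, `r = p ^ β`, where `d' = p ^ α` if `α = β` and `d' = 1` otherwise.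

Translation by an element killed by `p ^ (β - 1)` permutes the elements of order `p ^ β`, which
gives `F (p ^ α) * F (p ^ β) = φ (p ^ α) • F (p ^ β)` for `α < β`. For `α = β ≥ 1`, write
`F (p ^ α) = H (p ^ α) - H (p ^ (α - 1))` with `H n` the sum over the `n`-torsion subgroup; since
`F a * H n = φ a • H n` for `a ∣ n`, this yields
`F (p ^ α) ^ 2 = φ (p ^ α) • H (p ^ α) - p ^ (α - 1) • F (p ^ α)`, the local right-hand side
because `c (p ^ α) 1 = 1 - 1 / (p - 1)` and `φ (p ^ α) / (p - 1) = p ^ (α - 1)`.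

The maximality of `d'` pins down its factorization: `v_p d' = v_p q` when `v_p q = v_p r`, and
`v_p d' = 0` otherwise.
-/

noncomputable def F (n : ℕ) : AddMonoidAlgebra ℚ (AddCircle (1 : ℚ)) :=
  ∑ a ∈ (Finset.range n).filter (fun a => Nat.Coprime a n),
    AddMonoidAlgebra.single (((a : ℚ) / n : ℚ) : AddCircle (1 : ℚ)) 1

/-- `c d' e = ∏_{p | d', p ∤ e} (1 - 1/(p-1))`, product over primes. -/
noncomputable def c (d' e : ℕ) : ℚ :=
  ∏ p ∈ d'.primeFactors.filter (fun p => ¬ p ∣ e), (1 - 1 / ((p : ℚ) - 1))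

open Finset AddMonoidAlgebra
open scoped Nat

theorem sum_single_mul_sum_single_of_add_mem_iff {k G : Type*} [Semiring k] [AddGroup G]
    {S T : Finset G} (hST : ∀ y ∈ T, ∀ x, x + y ∈ S ↔ x ∈ S) :
    (∑ x ∈ S, single x (1 : k)) * ∑ y ∈ T, single y 1 = (#T : k) • ∑ x ∈ S, single x 1 := by
  calc (∑ x ∈ S, single x (1 : k)) * ∑ y ∈ T, single y 1
      = ∑ y ∈ T, ∑ x ∈ S, single (x + y) (1 : k) := by
        simp_rw [sum_mul_sum, single_mul_single, mul_one]
        exact sum_comm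
    _ = ∑ y ∈ T, ∑ x ∈ S, single x (1 : k) := sum_congr rfl fun y hy =>
        sum_nbij' (· + y) (· - y) (fun x hx => (hST y hy x).2 hx)
          (fun x hx => (hST y hy _).1 (by simpa using hx)) (by simp) (by simp) fun _ _ => rfl
    _ = _ := by rw [sum_const, ← Nat.cast_smul_eq_nsmul k]

theorem addOrderOf_add_eq_prime_pow_succ_iff {G : Type*} [AddCommGroup G] {p k : ℕ}
    [Fact p.Prime] {x y : G} (hy : p ^ k • y = 0) :
    addOrderOf (x + y) = p ^ (k + 1) ↔ addOrderOf x = p ^ (k + 1) := by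
  have hp : p.Prime := Fact.out
  have hy' : p ^ (k + 1) • y = 0 := by rw [pow_succ, mul_nsmul, hy, smul_zero]
  have key : ∀ z : G, addOrderOf z = p ^ (k + 1) ↔ ¬ p ^ k • z = 0 ∧ p ^ (k + 1) • z = 0 := by
    refine fun z => ⟨fun h => ⟨fun h' => ?_, h ▸ addOrderOf_nsmul_eq_zero z⟩,
      fun h => addOrderOf_eq_prime_pow h.1 h.2⟩
    have := Nat.le_of_dvd (pow_pos hp.pos k) (h ▸ addOrderOf_dvd_of_nsmul_eq_zero h')
    exact absurd this (not_le.2 (Nat.pow_lt_pow_right hp.one_lt k.lt_succ_self))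
  rw [key, key, nsmul_add, nsmul_add, hy, hy', add_zero, add_zero]

theorem sum_divisors_mul_of_coprime {M : Type*} [AddCommMonoid M] {m n : ℕ} (h : m.Coprime n)
    (f : ℕ → M) : ∑ e ∈ (m * n).divisors, f e = ∑ a ∈ m.divisors, ∑ b ∈ n.divisors, f (a * b) := by
  rw [Nat.divisors_mul, Finset.mul_def, sum_image h.mul_injOn_divisors, sum_product]

theorem gcd_mul_mul_of_coprime {q₁ r₁ q₂ r₂ : ℕ} (h : (q₁ * r₁).Coprime (q₂ * r₂)) :
    (q₁ * q₂).gcd (r₁ * r₂) = q₁.gcd r₁ * q₂.gcd r₂ := by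
  rw [Nat.Coprime.gcd_mul _ h.coprime_mul_left.coprime_mul_left_right,
    Nat.Coprime.gcd_mul_right_cancel _ h.symm.coprime_mul_right.coprime_mul_left_right,
    Nat.Coprime.gcd_mul_left_cancel _ h.coprime_mul_right.coprime_mul_left_right]

theorem c_mul {d₁ d₂ e₁ e₂ : ℕ} (hd : d₁.Coprime d₂) (h₁ : d₁.Coprime e₂) (h₂ : d₂.Coprime e₁) :
    c (d₁ * d₂) (e₁ * e₂) = c d₁ e₁ * c d₂ e₂ := by
  rw [c, hd.primeFactors_mul, filter_union,
    prod_union (disjoint_filter_filter hd.disjoint_primeFactors), c, c]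
  congr 1 <;> refine prod_congr (filter_congr fun p hp => ?_) fun _ _ => rfl
  · have hpe : ¬ p ∣ e₂ := (Nat.prime_of_mem_primeFactors hp).coprime_iff_not_dvd.1
      (h₁.coprime_dvd_left (Nat.dvd_of_mem_primeFactors hp))
    rw [(Nat.prime_of_mem_primeFactors hp).dvd_mul, or_iff_left hpe]
  · have hpe : ¬ p ∣ e₁ := (Nat.prime_of_mem_primeFactors hp).coprime_iff_not_dvd.1
      (h₂.coprime_dvd_left (Nat.dvd_of_mem_primeFactors hp))
    rw [(Nat.prime_of_mem_primeFactors hp).dvd_mul, or_iff_right hpe]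

theorem c_prime_pow_pow {p k : ℕ} (hp : p.Prime) (hk : k ≠ 0) (i : ℕ) :
    c (p ^ k) (p ^ i) = if i = 0 then 1 - 1 / ((p : ℚ) - 1) else 1 := by
  rw [c, Nat.primeFactors_prime_pow hk hp, filter_singleton]
  rcases i with _ | i
  · simp [hp.ne_one]
  · simp

theorem factorization_eq_ite_of_maximal {q r d' : ℕ} (hq : q ≠ 0) (hr : r ≠ 0)
    (hdvd : d' ∣ q.gcd r) (hcq : d'.Coprime (q / q.gcd r)) (hcr : d'.Coprime (r / q.gcd r))
    (hmax : ∀ e, e ∣ q.gcd r → e.Coprime (q / q.gcd r) → e.Coprime (r / q.gcd r) → e ∣ d')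
    (p : ℕ) :
    d'.factorization p =
      if q.factorization p = r.factorization p then q.factorization p else 0 := by
  have hd : q.gcd r ≠ 0 := Nat.gcd_ne_zero_left hq
  have hd' : d' ≠ 0 := ne_zero_of_dvd_ne_zero hd hdvd
  by_cases hp : p.Prime
  swap
  · simp [Nat.factorization_eq_zero_of_not_prime _ hp]
  have hdp : (q.gcd r).factorization p = min (q.factorization p) (r.factorization p) := by
    rw [Nat.factorization_gcd hq hr]; rfl
  have hd'p : d'.factorization p ≤ (q.gcd r).factorization p :=
    (Nat.factorization_le_iff_dvd hd' hd).2 hdvd p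
  have hdiv : ∀ m, q.gcd r ∣ m → m ≠ 0 →
      (p ∣ m / q.gcd r ↔ min (q.factorization p) (r.factorization p) < m.factorization p) := by
    intro m hm hm0
    rw [hp.dvd_iff_one_le_factorization (Nat.div_ne_zero_iff_of_dvd hm |>.2 ⟨hm0, hd⟩),
      Nat.factorization_div hm, Finsupp.tsub_apply, hdp]
    omega
  split_ifs with hαβ
  · refine le_antisymm (hd'p.trans (by omega)) ((hp.pow_dvd_iff_le_factorization hd').1 (hmax _
      ((hp.pow_dvd_iff_le_factorization hd).2 (by omega)) ?_ ?_))
    · exact Nat.Coprime.pow_left _ (hp.coprime_iff_not_dvd.2 fun h =>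
        absurd ((hdiv q (Nat.gcd_dvd_left q r) hq).1 h) (by omega))
    · exact Nat.Coprime.pow_left _ (hp.coprime_iff_not_dvd.2 fun h =>
        absurd ((hdiv r (Nat.gcd_dvd_right q r) hr).1 h) (by omega))
  · by_contra hne
    have hpd' : p ∣ d' := (hp.dvd_iff_one_le_factorization hd').2 (by omega)
    rcases lt_or_gt_of_ne hαβ with h | h
    · exact hp.coprime_iff_not_dvd.1 (hcr.coprime_dvd_left hpd')
        ((hdiv r (Nat.gcd_dvd_right q r) hr).2 (by omega))
    · exact hp.coprime_iff_not_dvd.1 (hcq.coprime_dvd_left hpd')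
        ((hdiv q (Nat.gcd_dvd_left q r) hq).2 (by omega))

theorem dvd_gcd_of_factorization_eq_ite {q r d' : ℕ} (hq : q ≠ 0) (hr : r ≠ 0) (hd' : d' ≠ 0)
    (hfac : ∀ p, d'.factorization p =
      if q.factorization p = r.factorization p then q.factorization p else 0) :
    d' ∣ q.gcd r := by
  refine Nat.dvd_gcd ((Nat.factorization_le_iff_dvd hd' hq).1 fun p => ?_)
    ((Nat.factorization_le_iff_dvd hd' hr).1 fun p => ?_) <;>
  · rw [hfac]
    split_ifs with h <;> omega

theorem factorization_ordCompl_eq_ite {q r d' : ℕ} (p : ℕ)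
    (hfac : ∀ ℓ, d'.factorization ℓ =
      if q.factorization ℓ = r.factorization ℓ then q.factorization ℓ else 0) (ℓ : ℕ) :
    (ordCompl[p] d').factorization ℓ =
      if (ordCompl[p] q).factorization ℓ = (ordCompl[p] r).factorization ℓ
      then (ordCompl[p] q).factorization ℓ else 0 := by
  simp only [Nat.factorization_ordCompl, Finsupp.erase_apply]
  split_ifs <;> simp_all

theorem ordCompl_lt_self {n p : ℕ} (hp : p.Prime) (hn : n ≠ 0) (hpn : p ∣ n) :
    ordCompl[p] n < n :=
  Nat.div_lt_self (Nat.pos_of_ne_zero hn)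
    (Nat.one_lt_pow (hp.factorization_pos_of_dvd hn hpn).ne' hp.one_lt)

local notation "𝕋" => AddCircle (1 : ℚ)

local instance : Fact ((0 : ℚ) < 1) := ⟨one_pos⟩

theorem injOn_coe_div (n : ℕ) :
    Set.InjOn (fun a : ℕ => (((a : ℚ) / n : ℚ) : 𝕋)) ↑((range n).filter (Nat.Coprime · n)) := by
  intro a ha b hb hab
  have hlt : ∀ x ∈ (range n).filter (Nat.Coprime · n), (x : ℚ) / n ∈ Set.Ico (0 : ℚ) (0 + 1) :=
    fun x hx => ⟨by positivity, by
      rw [zero_add, div_lt_one (by exact_mod_cast (mem_range.1 (mem_filter.1 hx).1).pos)]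
      exact_mod_cast mem_range.1 (mem_filter.1 hx).1⟩
  have := (AddCircle.coe_eq_coe_iff_of_mem_Ico (hlt a ha) (hlt b hb)).1 hab
  rw [div_left_inj' (by exact_mod_cast (mem_range.1 (mem_filter.1 ha).1).pos.ne')] at this
  exact_mod_cast this

noncomputable def pointsOfOrder (n : ℕ) : Finset 𝕋 :=
  ((range n).filter (Nat.Coprime · n)).image fun a : ℕ => (((a : ℚ) / n : ℚ) : 𝕋)

theorem F_eq_sum_pointsOfOrder (n : ℕ) : F n = ∑ x ∈ pointsOfOrder n, single x 1 := by
  rw [F, pointsOfOrder, sum_image (injOn_coe_div n)]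

theorem card_pointsOfOrder (n : ℕ) : #(pointsOfOrder n) = φ n := by
  rw [pointsOfOrder, card_image_of_injOn (injOn_coe_div n), Nat.totient]
  simp_rw [Nat.coprime_comm]

theorem mem_pointsOfOrder {n : ℕ} (hn : 0 < n) {x : 𝕋} :
    x ∈ pointsOfOrder n ↔ addOrderOf x = n := by
  simp [AddCircle.addOrderOf_eq_pos_iff hn, pointsOfOrder, and_assoc]

theorem addOrderOf_of_mem_pointsOfOrder {n : ℕ} {x : 𝕋} (hx : x ∈ pointsOfOrder n) :
    addOrderOf x = n := by
  rcases n.eq_zero_or_pos with rfl | hn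
  · simp [pointsOfOrder] at hx
  · exact (mem_pointsOfOrder hn).1 hx

theorem F_zero : F 0 = 0 := by simp [F]

theorem disjoint_pointsOfOrder {m n : ℕ} (h : m ≠ n) :
    Disjoint (pointsOfOrder m) (pointsOfOrder n) :=
  disjoint_left.2 fun _ hm hn =>
    h ((addOrderOf_of_mem_pointsOfOrder hm).symm.trans (addOrderOf_of_mem_pointsOfOrder hn))

noncomputable def torsionPoints (n : ℕ) : Finset 𝕋 := n.divisors.biUnion pointsOfOrder

theorem mem_torsionPoints {n : ℕ} (hn : n ≠ 0) {x : 𝕋} : x ∈ torsionPoints n ↔ n • x = 0 := by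
  rw [← addOrderOf_dvd_iff_nsmul_eq_zero, torsionPoints, mem_biUnion]
  constructor
  · rintro ⟨m, hm, hx⟩
    exact addOrderOf_of_mem_pointsOfOrder hx ▸ Nat.dvd_of_mem_divisors hm
  · intro h
    have hpos : 0 < addOrderOf x := Nat.pos_of_dvd_of_pos h (Nat.pos_of_ne_zero hn)
    exact ⟨_, Nat.mem_divisors.2 ⟨h, hn⟩, (mem_pointsOfOrder hpos).2 rfl⟩

theorem card_torsionPoints (n : ℕ) : #(torsionPoints n) = n := by
  rw [torsionPoints, card_biUnion fun _ _ _ _ h => disjoint_pointsOfOrder h]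
  simp_rw [card_pointsOfOrder]
  exact Nat.sum_totient n

theorem sum_torsionPoints (n : ℕ) :
    ∑ x ∈ torsionPoints n, single x (1 : ℚ) = ∑ m ∈ n.divisors, F m := by
  rw [torsionPoints, sum_biUnion fun _ _ _ _ h => disjoint_pointsOfOrder h]
  simp_rw [F_eq_sum_pointsOfOrder]

theorem F_mul_F_of_coprime {m n : ℕ} (h : m.Coprime n) : F m * F n = F (m * n) := by
  rcases m.eq_zero_or_pos with rfl | hm
  · simp [F_zero]
  rcases n.eq_zero_or_pos with rfl | hn
  · simp [F_zero]
  have hmn := Nat.mul_pos hm hn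
  have hmaps : ∀ z ∈ pointsOfOrder m ×ˢ pointsOfOrder n, z.1 + z.2 ∈ pointsOfOrder (m * n) := by
    simp only [mem_product, mem_pointsOfOrder hm, mem_pointsOfOrder hn, mem_pointsOfOrder hmn]
    rintro ⟨x, y⟩ ⟨hx, hy⟩
    rw [(AddCommute.all x y).addOrderOf_add_eq_mul_addOrderOf_of_coprime (hx ▸ hy ▸ h), hx, hy]
  have hinj : Set.InjOn (fun z : 𝕋 × 𝕋 => z.1 + z.2) ↑(pointsOfOrder m ×ˢ pointsOfOrder n) := by
    simp only [Set.InjOn, coe_product, Set.mem_prod, mem_coe, mem_pointsOfOrder hm,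
      mem_pointsOfOrder hn]
    rintro ⟨x, y⟩ ⟨hx, hy⟩ ⟨x', y'⟩ ⟨hx', hy'⟩ (hxy : x + y = x' + y')
    have hdiff : x - x' = y' - y := by rw [sub_eq_sub_iff_add_eq_add, hxy, add_comm]
    have hm' : m • (x - x') = 0 := by
      rw [nsmul_sub, ← hx, addOrderOf_nsmul_eq_zero, hx, ← hx', addOrderOf_nsmul_eq_zero, sub_zero]
    have hn' : n • (x - x') = 0 := by
      rw [hdiff, nsmul_sub, ← hy, addOrderOf_nsmul_eq_zero, hy, ← hy', addOrderOf_nsmul_eq_zero,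
        sub_zero]
    have hxx' : x = x' := sub_eq_zero.1 <| AddMonoid.addOrderOf_eq_one_iff.1 <|
      Nat.eq_one_of_dvd_coprimes h (addOrderOf_dvd_of_nsmul_eq_zero hm')
        (addOrderOf_dvd_of_nsmul_eq_zero hn')
    subst hxx'
    rw [add_left_cancel hxy]
  have himage : (pointsOfOrder m ×ˢ pointsOfOrder n).image (fun z => z.1 + z.2) =
      pointsOfOrder (m * n) := by
    refine eq_of_subset_of_card_le (image_subset_iff.2 hmaps) ?_
    rw [card_image_of_injOn hinj, card_product, card_pointsOfOrder, card_pointsOfOrder,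
      card_pointsOfOrder, Nat.totient_mul h]
  rw [F_eq_sum_pointsOfOrder, F_eq_sum_pointsOfOrder, F_eq_sum_pointsOfOrder, sum_mul_sum,
    ← sum_product', ← himage, sum_image hinj]
  simp_rw [single_mul_single, mul_one]

theorem F_prime_pow_mul_F_prime_pow_of_lt {p α β : ℕ} (hp : p.Prime) (h : α < β) :
    F (p ^ α) * F (p ^ β) = (φ (p ^ α) : ℚ) • F (p ^ β) := by
  have := Fact.mk hp
  obtain ⟨k, rfl⟩ : ∃ k, β = k + 1 := ⟨β - 1, by omega⟩
  rw [mul_comm, F_eq_sum_pointsOfOrder, F_eq_sum_pointsOfOrder (p ^ α),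
    sum_single_mul_sum_single_of_add_mem_iff, card_pointsOfOrder]
  intro y hy x
  rw [mem_pointsOfOrder (pow_pos hp.pos _)] at hy
  rw [mem_pointsOfOrder (pow_pos hp.pos _), mem_pointsOfOrder (pow_pos hp.pos _)]
  exact addOrderOf_add_eq_prime_pow_succ_iff
    (addOrderOf_dvd_iff_nsmul_eq_zero.1 (hy ▸ pow_dvd_pow p (by omega)))

theorem F_mul_sum_torsionPoints {m n : ℕ} (hmn : m ∣ n) (hn : n ≠ 0) :
    F m * ∑ x ∈ torsionPoints n, single x (1 : ℚ) =
      (φ m : ℚ) • ∑ x ∈ torsionPoints n, single x 1 := by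
  rw [mul_comm, F_eq_sum_pointsOfOrder, sum_single_mul_sum_single_of_add_mem_iff,
    card_pointsOfOrder]
  intro y hy x
  have hny : n • y = 0 :=
    addOrderOf_dvd_iff_nsmul_eq_zero.1 (addOrderOf_of_mem_pointsOfOrder hy ▸ hmn)
  rw [mem_torsionPoints hn, mem_torsionPoints hn, nsmul_add, hny, add_zero]

theorem F_prime_pow_succ_mul_sum_torsionPoints {p k : ℕ} (hp : p.Prime) :
    F (p ^ (k + 1)) * ∑ x ∈ torsionPoints (p ^ k), single x (1 : ℚ) =
      (p ^ k : ℚ) • F (p ^ (k + 1)) := by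
  have := Fact.mk hp
  rw [F_eq_sum_pointsOfOrder, sum_single_mul_sum_single_of_add_mem_iff, card_torsionPoints,
    Nat.cast_pow]
  intro y hy x
  rw [mem_pointsOfOrder (pow_pos hp.pos _), mem_pointsOfOrder (pow_pos hp.pos _)]
  exact addOrderOf_add_eq_prime_pow_succ_iff ((mem_torsionPoints (pow_ne_zero _ hp.ne_zero)).1 hy)

theorem F_prime_pow_succ_mul_self {p k : ℕ} (hp : p.Prime) :
    F (p ^ (k + 1)) * F (p ^ (k + 1)) =
      (φ (p ^ (k + 1)) : ℚ) • ∑ i ∈ range (k + 2), F (p ^ i) - (p ^ k : ℚ) • F (p ^ (k + 1)) := by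
  have hH : ∀ j, ∑ x ∈ torsionPoints (p ^ j), single x (1 : ℚ) = ∑ i ∈ range (j + 1), F (p ^ i) :=
    fun j => by rw [sum_torsionPoints, Nat.sum_divisors_prime_pow hp]
  have hF : F (p ^ (k + 1)) = ∑ x ∈ torsionPoints (p ^ (k + 1)), single x (1 : ℚ) -
      ∑ x ∈ torsionPoints (p ^ k), single x 1 := by
    rw [hH, hH, sum_range_succ _ (k + 1), add_sub_cancel_left]
  calc F (p ^ (k + 1)) * F (p ^ (k + 1))
      = F (p ^ (k + 1)) * (∑ x ∈ torsionPoints (p ^ (k + 1)), single x (1 : ℚ) -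
          ∑ x ∈ torsionPoints (p ^ k), single x 1) := congrArg _ hF
    _ = _ := by
      rw [mul_sub, F_mul_sum_torsionPoints dvd_rfl (pow_ne_zero _ hp.ne_zero),
        F_prime_pow_succ_mul_sum_torsionPoints hp, hH]

noncomputable def expansion (q r d' : ℕ) : AddMonoidAlgebra ℚ 𝕋 :=
  (φ (q.gcd r) : ℚ) • ∑ e ∈ d'.divisors, c d' e • F (q * r / (q.gcd r * e))

theorem expansion_comm (q r d' : ℕ) : expansion q r d' = expansion r q d' := by
  rw [expansion, expansion, Nat.gcd_comm, mul_comm q]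

theorem expansion_mul {q₁ r₁ d₁ q₂ r₂ d₂ : ℕ} (hcop : (q₁ * r₁).Coprime (q₂ * r₂))
    (hd₁ : d₁ ∣ q₁.gcd r₁) (hd₂ : d₂ ∣ q₂.gcd r₂) :
    expansion (q₁ * q₂) (r₁ * r₂) (d₁ * d₂) = expansion q₁ r₁ d₁ * expansion q₂ r₂ d₂ := by
  have hg₁ : q₁.gcd r₁ ∣ q₁ * r₁ := (Nat.gcd_dvd_left _ _).mul_right _
  have hg₂ : q₂.gcd r₂ ∣ q₂ * r₂ := (Nat.gcd_dvd_left _ _).mul_right _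
  have hgcop : (q₁.gcd r₁).Coprime (q₂.gcd r₂) := (hcop.coprime_dvd_left hg₁).coprime_dvd_right hg₂
  have hdcop : d₁.Coprime d₂ := (hgcop.coprime_dvd_left hd₁).coprime_dvd_right hd₂
  have hquot : ∀ {q r d e : ℕ}, d ∣ q.gcd r → e ∣ d → q.gcd r * e ∣ q * r := fun hd he =>
    mul_dvd_mul (Nat.gcd_dvd_left _ _) (he.trans (hd.trans (Nat.gcd_dvd_right _ _)))
  rw [expansion, expansion, expansion, gcd_mul_mul_of_coprime hcop, Nat.totient_mul hgcop,
    Nat.cast_mul, sum_divisors_mul_of_coprime hdcop, smul_mul_smul_comm, sum_mul_sum]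
  refine congrArg _ (sum_congr rfl fun e₁ he₁ => sum_congr rfl fun e₂ he₂ => ?_)
  have he₁ := Nat.dvd_of_mem_divisors he₁
  have he₂ := Nat.dvd_of_mem_divisors he₂
  have h₁ := hquot hd₁ he₁
  have h₂ := hquot hd₂ he₂
  rw [smul_mul_smul_comm,
    c_mul hdcop (hdcop.coprime_dvd_right he₂) (hdcop.symm.coprime_dvd_right he₁),
    F_mul_F_of_coprime ((hcop.coprime_dvd_left (Nat.div_dvd_of_dvd h₁)).coprime_dvd_right
      (Nat.div_dvd_of_dvd h₂)),
    Nat.div_mul_div_comm h₁ h₂, mul_mul_mul_comm q₁, mul_mul_mul_comm (q₁.gcd r₁)]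

theorem expansion_prime_pow_of_lt {p α β : ℕ} (hp : p.Prime) (h : α < β) :
    expansion (p ^ α) (p ^ β) 1 = (φ (p ^ α) : ℚ) • F (p ^ β) := by
  rw [expansion, Nat.gcd_eq_left (pow_dvd_pow p h.le), Nat.divisors_one, sum_singleton, mul_one,
    Nat.mul_div_cancel_left _ (pow_pos hp.pos _)]
  simp [c]

theorem expansion_prime_pow_succ_self {p k : ℕ} (hp : p.Prime) :
    expansion (p ^ (k + 1)) (p ^ (k + 1)) (p ^ (k + 1)) =
      (φ (p ^ (k + 1)) : ℚ) • ∑ i ∈ range (k + 2), F (p ^ i) - (p ^ k : ℚ) • F (p ^ (k + 1)) := by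
  have hterm : ∀ i ∈ range (k + 1), c (p ^ (k + 1)) (p ^ (i + 1)) •
      F (p ^ (k + 1) * p ^ (k + 1) / (p ^ (k + 1) * p ^ (i + 1))) = F (p ^ (k + 1 - 1 - i)) := by
    intro i hi
    rw [c_prime_pow_pow hp k.succ_ne_zero, if_neg i.succ_ne_zero, one_smul,
      Nat.mul_div_mul_left _ _ (pow_pos hp.pos _), Nat.pow_div (by simp at hi; omega) hp.pos]
    congr 2
    omega
  rw [expansion, Nat.gcd_self, Nat.sum_divisors_prime_pow hp, sum_range_succ', sum_congr rfl hterm,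
    sum_range_reflect (fun i => F (p ^ i)), sum_range_succ _ (k + 1),
    c_prime_pow_pow hp k.succ_ne_zero, if_pos rfl, pow_zero, mul_one,
    Nat.mul_div_cancel_left _ (pow_pos hp.pos _), Nat.totient_prime_pow_succ hp,
    Nat.cast_mul, Nat.cast_sub hp.one_le]
  have hp1 : (p : ℚ) - 1 ≠ 0 := sub_ne_zero.2 (by exact_mod_cast hp.ne_one)
  push_cast
  match_scalars <;> field_simp

theorem F_prime_pow_mul_F_prime_pow {p : ℕ} (hp : p.Prime) (α β : ℕ) :
    F (p ^ α) * F (p ^ β) = expansion (p ^ α) (p ^ β) (p ^ if α = β then α else 0) := by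
  rcases lt_trichotomy α β with h | rfl | h
  · rw [if_neg h.ne, pow_zero, expansion_prime_pow_of_lt hp h,
      F_prime_pow_mul_F_prime_pow_of_lt hp h]
  · rw [if_pos rfl]
    rcases α with _ | k
    · simp [expansion, c, F_mul_F_of_coprime]
    · rw [F_prime_pow_succ_mul_self hp, expansion_prime_pow_succ_self hp]
  · rw [if_neg h.ne', pow_zero, mul_comm, expansion_comm, expansion_prime_pow_of_lt hp h,
      F_prime_pow_mul_F_prime_pow_of_lt hp h]

theorem F_mul_F_eq_expansion {q r d' : ℕ} (hq : q ≠ 0) (hr : r ≠ 0) (hd' : d' ≠ 0)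
    (hfac : ∀ p, d'.factorization p =
      if q.factorization p = r.factorization p then q.factorization p else 0) :
    F q * F r = expansion q r d' := by
  induction hn : q * r using Nat.strong_induction_on generalizing q r d' with
  | _ n ih =>
  by_cases h1 : q * r = 1
  · obtain ⟨rfl, rfl⟩ := mul_eq_one.1 h1
    obtain rfl : d' = 1 := Nat.eq_of_factorization_eq hd' one_ne_zero (by simp [hfac])
    simp [expansion, c, F_mul_F_of_coprime]
  obtain ⟨p, hp, hpqr⟩ := Nat.exists_prime_and_dvd h1
  set α := q.factorization p
  set β := r.factorization p
  have hq₀ : p ^ α * ordCompl[p] q = q := Nat.ordProj_mul_ordCompl_eq_self q p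
  have hr₀ : p ^ β * ordCompl[p] r = r := Nat.ordProj_mul_ordCompl_eq_self r p
  have hd₀ : p ^ (if α = β then α else 0) * ordCompl[p] d' = d' := by
    rw [← hfac p]; exact Nat.ordProj_mul_ordCompl_eq_self d' p
  have hfac₀ := factorization_ordCompl_eq_ite p hfac
  have hlt : ordCompl[p] q * ordCompl[p] r < n :=
    hn ▸ Nat.ordCompl_mul q r p ▸ ordCompl_lt_self hp (mul_ne_zero hq hr) hpqr
  have hcop : (p ^ α * p ^ β).Coprime (ordCompl[p] q * ordCompl[p] r) := by
    rw [← pow_add]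
    exact ((Nat.coprime_ordCompl hp hq).mul_right (Nat.coprime_ordCompl hp hr)).pow_left _
  have hdvd : p ^ (if α = β then α else 0) ∣ (p ^ α).gcd (p ^ β) := by
    split_ifs with h
    · rw [h, Nat.gcd_self]
    · exact one_dvd _
  have hq₀pos := Nat.ordCompl_pos p hq
  have hr₀pos := Nat.ordCompl_pos p hr
  have hd₀pos := Nat.ordCompl_pos p hd'
  calc F q * F r = (F (p ^ α) * F (p ^ β)) * (F (ordCompl[p] q) * F (ordCompl[p] r)) := by
        rw [mul_mul_mul_comm, F_mul_F_of_coprime ((Nat.coprime_ordCompl hp hq).pow_left _),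
          F_mul_F_of_coprime ((Nat.coprime_ordCompl hp hr).pow_left _), hq₀, hr₀]
    _ = expansion q r d' := by
        rw [F_prime_pow_mul_F_prime_pow hp, ih _ hlt hq₀pos.ne' hr₀pos.ne' hd₀pos.ne' hfac₀ rfl,
          ← expansion_mul hcop hdvd
            (dvd_gcd_of_factorization_eq_ite hq₀pos.ne' hr₀pos.ne' hd₀pos.ne' hfac₀),
          hq₀, hr₀, hd₀]

theorem stmt_5_general (q r d d' : ℕ)
    (hd : d = Nat.gcd q r)
    (hd'1 : d' ∣ d) (hd'2 : Nat.Coprime d' (q / d)) (hd'3 : Nat.Coprime d' (r / d))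
    (hd'max : ∀ e : ℕ, e ∣ d → Nat.Coprime e (q / d) → Nat.Coprime e (r / d) → e ∣ d') :
    F q * F r
      = (Nat.totient d : ℚ) • ∑ e ∈ d'.divisors, c d' e • F (q * r / (d * e)) := by
  subst hd
  rcases eq_or_ne q 0 with rfl | hq
  · simp [F_zero]
  rcases eq_or_ne r 0 with rfl | hr
  · simp [F_zero]
  exact F_mul_F_eq_expansion hq hr (ne_zero_of_dvd_ne_zero (Nat.gcd_ne_zero_left hq) hd'1)
    (factorization_eq_ite_of_maximal hq hr hd'1 hd'2 hd'3 hd'max)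

theorem stmt_5 (q r d d' : ℕ) (hq : 0 < q) (hr : 0 < r)
    (hd : d = Nat.gcd q r)
    (hd'1 : d' ∣ d) (hd'2 : Nat.Coprime d' (q / d)) (hd'3 : Nat.Coprime d' (r / d))
    (hd'max : ∀ e : ℕ, e ∣ d → Nat.Coprime e (q / d) → Nat.Coprime e (r / d) → e ∣ d') :
    F q * F r
      = (Nat.totient d : ℚ) • ∑ e ∈ d'.divisors, c d' e • F (q * r / (d * e)) :=
  stmt_5_general q r d d' hd hd'1 hd'2 hd'3 hd'max
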